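/- arXiv:2202.00248 — 3 statements merged into one kernel-verified Lean document; each statement's English description precedes it below -/
import Mathlib

section
/- If {a_{11}, a_{12}, a_{21}, a_{22}, ..., a_{e1}, a_{e2}} is a symplectic subset of (Z_{p^a})^{2n}, where p is a prime and a ≥ 1, then e ≤ n. -/
open scoped BigOperators

/-- The symplectic inner product on `R^{2n}`: `⟨(x,y) | (x',y')⟩ₛ = y·x' − y'·x`. -/
def symp {R : Type*} [CommRing R] {n : ℕ}
    (u v : (Fin n → R) × (Fin n → R)) : R :=
  dotProduct u.2 v.1 - dotProduct v.2 u.1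

/-!
Rescale each `a2 i` so that all the pairings `⟨a1 i | a2 i⟩ₛ` equal `p^(a-1)`: every nonzero
element of `ℤ/p^a` divides `p^(a-1)`. Putting the `2e` vectors as the rows of a matrix `X`, this
says `X J Xᵀ = p^(a-1) J` over `ℤ/p^a`, with `J` the standard symplectic matrix. Lifting `X` to
an integer matrix, `X J Xᵀ = p^(a-1) W` for an integer matrix `W ≡ J (mod p)`, so `det W` is
prime to `p`, in particular nonzero. Hence `X J Xᵀ` is a nonsingular `2e × 2e` matrix of rank at
most `2n`.
-/

open Matrix

section Symp

variable {R : Type*} [CommRing R] {n : ℕ}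

lemma symp_self (u : (Fin n → R) × (Fin n → R)) : symp u u = 0 := sub_self _

lemma symp_comm (u v : (Fin n → R) × (Fin n → R)) : symp v u = -symp u v := by
  simp [symp]

lemma symp_smul_left (c : R) (u v : (Fin n → R) × (Fin n → R)) :
    symp (c • u) v = c * symp u v := by
  simp only [symp, Prod.smul_fst, Prod.smul_snd, dotProduct_smul, smul_dotProduct, smul_eq_mul,
    mul_sub]

lemma symp_smul_right (c : R) (u v : (Fin n → R) × (Fin n → R)) :
    symp u (c • v) = c * symp u v := by
  simp only [symp, Prod.smul_fst, Prod.smul_snd, dotProduct_smul, smul_dotProduct, smul_eq_mul,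
    mul_sub]

lemma symp_eq_dotProduct_J_mulVec (u v : (Fin n → R) × (Fin n → R)) :
    symp u v = Sum.elim u.1 u.2 ⬝ᵥ (J (Fin n) R *ᵥ Sum.elim v.1 v.2) := by
  simp only [symp, dotProduct_comm u.2, sub_eq_neg_add, J, fromBlocks_mulVec, Sum.elim_comp_inl,
    zero_mulVec, Sum.elim_comp_inr, neg_mulVec, one_mulVec, zero_add, add_zero,
    sumElim_dotProduct_sumElim, dotProduct_neg, add_left_inj, neg_inj]
  exact dotProduct_comm _ _

lemma mul_J_mul_transpose_eq_symp {ι : Type*} (v : ι → (Fin n → R) × (Fin n → R)) :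
    of (fun r => Sum.elim (v r).1 (v r).2) * J (Fin n) R *
        (of fun r => Sum.elim (v r).1 (v r).2)ᵀ = of fun r s => symp (v r) (v s) := by
  ext r s
  rw [of_apply, symp_eq_dotProduct_J_mulVec, Matrix.mul_assoc, mul_apply]
  simp [mul_apply, mulVec, dotProduct]

lemma symp_gram_eq_smul_J {ι : Type*} [DecidableEq ι] {c : R}
    (a1 a2 : ι → (Fin n → R) × (Fin n → R)) (d : ι → R)
    (h11 : ∀ i j, i ≠ j → symp (a1 i) (a1 j) = 0)
    (h22 : ∀ i j, i ≠ j → symp (a2 i) (a2 j) = 0)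
    (h12 : ∀ i k, i ≠ k → symp (a1 i) (a2 k) = 0)
    (hd : ∀ i, symp (a1 i) (a2 i) * d i = c) :
    (of fun r s => symp (Sum.elim (fun i => d i • a2 i) a1 r)
      (Sum.elim (fun i => d i • a2 i) a1 s)) = c • J ι R := by
  have h21 : ∀ i j, symp (a2 i) (a1 j) = -symp (a1 j) (a2 i) := fun i j => symp_comm _ _
  ext (i | i) (j | j) <;> rcases eq_or_ne i j with rfl | hij <;>
    simp [J, one_apply, symp_smul_left, symp_smul_right, symp_self, mul_comm (d _), *, Ne.symm]

end Symp

section PrimePower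

variable {p a : ℕ}

lemma exists_mul_eq_pow_pred (hp : p.Prime) {c : ZMod (p ^ a)} (hc : c ≠ 0) :
    ∃ d : ZMod (p ^ a), c * d = (p : ZMod (p ^ a)) ^ (a - 1) := by
  have : NeZero (p ^ a) := ⟨pow_ne_zero _ hp.ne_zero⟩
  obtain ⟨s, t, hpt, hst⟩ :=
    Nat.exists_eq_pow_mul_and_not_dvd ((ZMod.val_ne_zero c).2 hc) p hp.ne_one
  have hsa : s < a := (Nat.pow_lt_pow_iff_right hp.one_lt).1 <|
    (Nat.le_of_dvd (Nat.pos_of_ne_zero ((ZMod.val_ne_zero c).2 hc)) ⟨t, hst⟩).trans_lt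
      (ZMod.val_lt c)
  have ht : IsUnit (t : ZMod (p ^ a)) := (ZMod.isUnit_iff_coprime t _).2 <|
    Nat.Coprime.pow_right a (hp.coprime_iff_not_dvd.2 hpt).symm
  refine ⟨(p : ZMod (p ^ a)) ^ (a - 1 - s) * ↑ht.unit⁻¹, ?_⟩
  rw [← ZMod.natCast_zmod_val c, hst]
  push_cast
  calc (p : ZMod (p ^ a)) ^ s * t * ((p : ZMod (p ^ a)) ^ (a - 1 - s) * ↑ht.unit⁻¹)
      = (p : ZMod (p ^ a)) ^ (s + (a - 1 - s)) * (t * ↑ht.unit⁻¹) := by ring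
    _ = (p : ZMod (p ^ a)) ^ (a - 1) := by
      rw [ht.mul_val_inv, mul_one, Nat.add_sub_cancel' (by omega)]

lemma exists_eq_pow_pred_mul_of_intCast_eq (ha : 1 ≤ a) {y : ℤ} {u : ZMod (p ^ a)}
    (h : (y : ZMod (p ^ a)) = (p : ZMod (p ^ a)) ^ (a - 1) * u) :
    ∃ w : ℤ, y = (p : ℤ) ^ (a - 1) * w ∧
      (w : ZMod p) = ZMod.castHom (dvd_pow_self p (by omega)) (ZMod p) u := by
  obtain ⟨k, hk⟩ : ((p ^ a : ℕ) : ℤ) ∣ y - p ^ (a - 1) * (ZMod.cast u : ℤ) := by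
    rw [← ZMod.intCast_zmod_eq_zero_iff_dvd]
    push_cast
    rw [h, sub_self]
  refine ⟨ZMod.cast u + p * k, ?_, ?_⟩
  · have hpa : (p : ℤ) ^ a = p ^ (a - 1) * p := by rw [← pow_succ, Nat.sub_add_cancel ha]
    push_cast at hk
    linear_combination hk + k * hpa
  · simp [ZMod.intCast_cast]

end PrimePower

lemma card_le_card_of_det_mul_ne_zero {m k : Type*} [Fintype m] [DecidableEq m] [Fintype k]
    (A : Matrix m k ℤ) (B : Matrix k m ℤ) (h : (A * B).det ≠ 0) :
    Fintype.card m ≤ Fintype.card k :=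
  calc Fintype.card m = (A * B).rank := (rank_of_det_ne_zero h).symm
    _ ≤ A.rank := rank_mul_le_left A B
    _ ≤ Fintype.card k := rank_le_card_width A

lemma card_le_card_of_mul_eq_pow_pred_smul {m k : Type*} [Fintype m] [DecidableEq m] [Fintype k]
    {p a : ℕ} [Fact p.Prime] (ha : 1 ≤ a) (A : Matrix m k (ZMod (p ^ a)))
    (B : Matrix k m (ZMod (p ^ a))) {U : Matrix m m (ZMod (p ^ a))} (hU : IsUnit U.det)
    (h : A * B = (p : ZMod (p ^ a)) ^ (a - 1) • U) :
    Fintype.card m ≤ Fintype.card k := by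
  set lift : ZMod (p ^ a) → ℤ := ZMod.cast
  have hlift : (A.map lift * B.map lift).map (Int.castRingHom _) =
      (p : ZMod (p ^ a)) ^ (a - 1) • U := by
    rw [Matrix.map_mul, ← h]
    congr 1 <;> ext <;> exact ZMod.intCast_zmod_cast _
  choose W hW hWU using fun r s => exists_eq_pow_pred_mul_of_intCast_eq ha (congrFun₂ hlift r s)
  have hWdet : (of W).det ≠ 0 := by
    intro h0
    have hWmod : (of W).map (Int.castRingHom (ZMod p)) =
        U.map (ZMod.castHom (dvd_pow_self p (by omega)) (ZMod p)) :=
      Matrix.ext hWU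
    have := congrArg det hWmod
    rw [← RingHom.mapMatrix_apply, ← RingHom.mapMatrix_apply, ← RingHom.map_det,
      ← RingHom.map_det, h0, map_zero] at this
    exact (hU.map _).ne_zero this.symm
  have hAB : A.map lift * B.map lift = ((p : ℤ) ^ (a - 1)) • of W := Matrix.ext hW
  refine card_le_card_of_det_mul_ne_zero (A.map lift) (B.map lift) ?_
  rw [hAB, det_smul]
  exact mul_ne_zero (pow_ne_zero _ (pow_ne_zero _ (mod_cast (Fact.out : p.Prime).ne_zero))) hWdet

theorem stmt_3 (p a n e : ℕ) (hp : p.Prime) (ha : 1 ≤ a)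
    (a1 a2 : Fin e → (Fin n → ZMod (p ^ a)) × (Fin n → ZMod (p ^ a)))
    (h11 : ∀ i j, i ≠ j → symp (a1 i) (a1 j) = 0)
    (h22 : ∀ i j, i ≠ j → symp (a2 i) (a2 j) = 0)
    (h12 : ∀ i k, i ≠ k → symp (a1 i) (a2 k) = 0)
    (hne : ∀ i, symp (a1 i) (a2 i) ≠ 0) :
    e ≤ n := by
  have : Fact p.Prime := ⟨hp⟩
  choose d hd using fun i => exists_mul_eq_pow_pred hp (hne i)
  set v := Sum.elim (fun i => d i • a2 i) a1
  set X : Matrix _ _ (ZMod (p ^ a)) := of fun r => Sum.elim (v r).1 (v r).2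
  have hgram : X * (J (Fin n) (ZMod (p ^ a)) * Xᵀ) =
      (p : ZMod (p ^ a)) ^ (a - 1) • J (Fin e) _ := by
    rw [← Matrix.mul_assoc, mul_J_mul_transpose_eq_symp,
      symp_gram_eq_smul_J a1 a2 d h11 h22 h12 hd]
  have hcard := card_le_card_of_mul_eq_pow_pred_smul ha X _ (isUnit_det_J _ _) hgram
  simp only [Fintype.card_sum, Fintype.card_fin] at hcard
  omega
end

section
/- Let C ⊆ R^{2n} be an additive code over a finite commutative local Frobenius ring R with generating character χ, with a generating set G containing e hyperbolic pairs u_{i1}, u_{i2} (i = 1,...,e) and otherwise isotropic generators. If there exists a symplectic subset {a_{11}, a_{12}, ..., a_{e1}, a_{e2}} ⊆ R^{2c} with χ(⟨u_{i1} | u_{i2}⟩_s) = χ(⟨a_{i1} | a_{i2}⟩_s) for each i, then C has a χ-self-orthogonal extension C' ⊆ R^{2(n+c)}. -/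
/-!
Lift each hyperbolic pair `(u_{i1}, u_{i2})` to `((u_{i1}, a_{i1}), (u_{i2}, -a_{i2}))` and each
isotropic generator `z` to `(z, 0)`. The symplectic form of two lifts is the sum of the forms of
their halves, so within a pair the nontrivial value `χ⟨u_{i1} | u_{i2}⟩ₛ` is cancelled by
`χ⟨a_{i1} | -a_{i2}⟩ₛ = χ⟨a_{i1} | a_{i2}⟩ₛ⁻¹`, while between different pairs, or against an
isotropic generator, both halves are already `χ`-orthogonal. Hence the lifts generate a
`χ`-self-orthogonal group, which the additive puncturing map sends onto the group generated by the
original generators.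

A generator may occur in several of the listed pairs. The hyperbolicity assumptions force such
pairs to agree up to order, and only one index of each unordered pair is lifted: lifting two of
them would give the same generator two tails that need not be orthogonal.
-/

open scoped BigOperators

/-- Puncturing a vector of `R^{2(n+c)}` at the coordinates
`n+1,…,n+c, 2n+1,…,2n+2c` (the last `c` coordinates of each half). -/
def punct {R : Type*} (n c : ℕ)
    (u : (Fin (n + c) → R) × (Fin (n + c) → R)) :
    (Fin n → R) × (Fin n → R) :=
  (fun i => u.1 (Fin.castAdd c i), fun i => u.2 (Fin.castAdd c i))

/-- The `χ`-symplectic dual (as a set) of a set `C ⊆ R^{2n}`. -/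
def chiDualSet {R : Type*} [CommRing R] {n : ℕ} (χ : R → ℂ)
    (C : Set ((Fin n → R) × (Fin n → R))) : Set ((Fin n → R) × (Fin n → R)) :=
  {v | ∀ c ∈ C, χ (symp c v) = 1}

/-- The `t`-th `χ`-symplectic dual (as a set): symplectic products whose character
value is a `pt`-th root of unity (`pt = p^t`). -/
def chiDualSetT {R : Type*} [CommRing R] {n : ℕ} (χ : R → ℂ)
    (C : Set ((Fin n → R) × (Fin n → R))) (pt : ℕ) :
    Set ((Fin n → R) × (Fin n → R)) :=
  {v | ∀ c ∈ C, (χ (symp c v)) ^ pt = 1}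

/-- The rank (minimal number of generators) of the quotient of the additive group
generated by `C` modulo `D`: the least `k` such that `k` elements of `C` generate
`C` modulo `D`. -/
noncomputable def relRank {V : Type*} [AddCommGroup V] (C D : Set V) : ℕ :=
  sInf {k : ℕ | ∃ f : Fin k → V, (∀ i, f i ∈ C) ∧
    ∀ x ∈ C, ∃ g : Fin k → ℤ, x - ∑ i, g i • f i ∈ D}

lemma AddChar.map_neg_eq_one {A M : Type*} [AddGroup A] [DivisionMonoid M] (ψ : AddChar A M)
    {a : A} (h : ψ a = 1) : ψ (-a) = 1 := by
  rw [AddChar.map_neg_eq_inv, h, inv_one]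

lemma iUnion_mem_range_rangeSplitting {ι α β : Type*} (f : ι → α) (g : ι → Set β)
    (hg : ∀ i j, f i = f j → g i = g j) :
    ⋃ i ∈ Set.range (Set.rangeSplitting f), g i = ⋃ i, g i := by
  refine subset_antisymm (Set.iUnion₂_subset_iUnion _ _) (Set.iUnion_subset fun j => ?_)
  rw [hg j _ (Set.apply_rangeSplitting f ⟨f j, j, rfl⟩).symm]
  exact Set.subset_biUnion_of_mem (Set.mem_range_self _)

section

variable {R : Type*}

local notation "𝕍" N => (Fin N → R) × (Fin N → R)

section Symp

variable [CommRing R] {N : ℕ}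

lemma symp_self_s7 (x : 𝕍 N) : symp x x = 0 := sub_self _

lemma symp_swap (x y : 𝕍 N) : symp y x = -symp x y := by
  unfold symp; ring

lemma symp_zero_left (y : 𝕍 N) : symp 0 y = 0 := by
  simp [symp]

lemma symp_zero_right (x : 𝕍 N) : symp x 0 = 0 := by
  simp [symp]

lemma symp_add_right (x y y' : 𝕍 N) :
    symp x (y + y') = symp x y + symp x y' := by
  simp only [symp, Prod.fst_add, Prod.snd_add, dotProduct_add, add_dotProduct]
  ring

lemma symp_neg_right (x y : 𝕍 N) : symp x (-y) = -symp x y := by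
  simp only [symp, Prod.fst_neg, Prod.snd_neg, dotProduct_neg, neg_dotProduct]
  ring

lemma symp_neg_left (x y : 𝕍 N) : symp (-x) y = -symp x y := by
  rw [symp_swap, symp_neg_right, neg_neg, symp_swap]

variable (χ : AddChar R ℂ)

lemma chi_symp_swap_eq_one {x y : 𝕍 N} (h : χ (symp x y) = 1) :
    χ (symp y x) = 1 := by
  rw [symp_swap]
  exact χ.map_neg_eq_one h

lemma chi_symp_eq_one_of_mem_pair {a b x y : 𝕍 N}
    (hab : χ (symp a b) = 1) (hx : x ∈ ({a, b} : Set _)) (hy : y ∈ ({a, b} : Set _)) :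
    χ (symp x y) = 1 := by
  rcases hx with rfl | rfl <;> rcases hy with rfl | rfl <;>
    first
    | rw [symp_self_s7, AddChar.map_zero_eq_one]
    | exact hab
    | exact chi_symp_swap_eq_one χ hab

def chiDual (S : Set (𝕍 N)) : AddSubgroup (𝕍 N) where
  carrier := chiDualSet χ S
  zero_mem' _ _ := by rw [symp_zero_right, AddChar.map_zero_eq_one]
  add_mem' hx hy c hc := by rw [symp_add_right, AddChar.map_add_eq_mul, hx c hc, hy c hc, one_mul]
  neg_mem' hx c hc := by
    rw [symp_neg_right]
    exact χ.map_neg_eq_one (hx c hc)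

lemma closure_subset_chiDualSet {S : Set (𝕍 N)}
    (hS : S ⊆ chiDualSet χ S) :
    SetLike.coe (AddSubgroup.closure S) ⊆ chiDualSet χ (AddSubgroup.closure S) := by
  have hS' : S ⊆ chiDualSet χ (AddSubgroup.closure S) := fun y hy x hx =>
    chi_symp_swap_eq_one χ ((AddSubgroup.closure_le (chiDual χ S)).mpr hS hx y hy)
  exact (AddSubgroup.closure_le (chiDual χ (SetLike.coe (AddSubgroup.closure S)))).mpr hS'

end Symp

section Append

variable {n c : ℕ}

def sympAppend (g : 𝕍 n) (w : 𝕍 c) : 𝕍 (n + c) :=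
  (Fin.append g.1 w.1, Fin.append g.2 w.2)

lemma dotProduct_append [CommRing R] (x a : Fin n → R) (y b : Fin c → R) :
    Fin.append x y ⬝ᵥ Fin.append a b = x ⬝ᵥ a + y ⬝ᵥ b := by
  simp [dotProduct, Fin.sum_univ_add]

lemma symp_sympAppend [CommRing R] (g h : 𝕍 n) (w w' : 𝕍 c) :
    symp (sympAppend g w) (sympAppend h w') = symp g h + symp w w' := by
  simp only [symp, sympAppend, dotProduct_append]
  ring

lemma chi_symp_sympAppend [CommRing R] (χ : AddChar R ℂ) (g h : 𝕍 n)
    (w w' : 𝕍 c) :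
    χ (symp (sympAppend g w) (sympAppend h w')) = χ (symp g h) * χ (symp w w') := by
  rw [symp_sympAppend, AddChar.map_add_eq_mul]

lemma chi_symp_sympAppend_neg_eq_one [CommRing R] {χ : AddChar R ℂ} {g h : 𝕍 n} {w w' : 𝕍 c}
    (hgw : χ (symp g h) = χ (symp w w')) :
    χ (symp (sympAppend g w) (sympAppend h (-w'))) = 1 := by
  rw [chi_symp_sympAppend, symp_neg_right, AddChar.map_neg_eq_inv, hgw,
    (χ.val_isUnit _).mul_inv_cancel]

@[simp]
lemma punct_sympAppend (g : 𝕍 n) (w : 𝕍 c) :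
    punct n c (sympAppend g w) = g := by
  simp [punct, sympAppend]

variable (R n c) in
def punctHom [AddGroup R] : (𝕍 (n + c)) →+ (𝕍 n) where
  toFun := punct n c
  map_zero' := rfl
  map_add' _ _ := rfl

lemma punct_image_closure [AddGroup R] (T : Set (𝕍 (n + c))) :
    punct n c '' AddSubgroup.closure T =
      (AddSubgroup.closure (punct n c '' T) : Set (𝕍 n)) :=
  congrArg SetLike.coe ((punctHom R n c).map_closure T)

end Append

section Hyperbolic

variable [CommRing R] {N e : ℕ} {χ : AddChar R ℂ} {G : Set ((Fin N → R) × (Fin N → R))}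
  {u1 u2 : Fin e → (Fin N → R) × (Fin N → R)}

structure IsHyperbolicPairs (χ : AddChar R ℂ) (G : Set (𝕍 N)) (u1 u2 : Fin e → 𝕍 N) : Prop where
  left_mem : ∀ i, u1 i ∈ G
  right_mem : ∀ i, u2 i ∈ G
  chi_symp_ne_one : ∀ i, χ (symp (u1 i) (u2 i)) ≠ 1
  chi_symp_left_eq_one : ∀ i, ∀ h ∈ G, h ≠ u2 i → χ (symp (u1 i) h) = 1
  chi_symp_right_eq_one : ∀ i, ∀ h ∈ G, h ≠ u1 i → χ (symp (u2 i) h) = 1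

namespace IsHyperbolicPairs

lemma eq_right_of_chi_symp_ne_one (hu : IsHyperbolicPairs χ G u1 u2)
    {i : Fin e} {h : 𝕍 N} (hh : h ∈ G)
    (hne : χ (symp (u1 i) h) ≠ 1) : h = u2 i :=
  not_imp_comm.1 (hu.chi_symp_left_eq_one i h hh) hne

lemma eq_left_of_chi_symp_ne_one (hu : IsHyperbolicPairs χ G u1 u2)
    {i : Fin e} {h : 𝕍 N} (hh : h ∈ G)
    (hne : χ (symp (u2 i) h) ≠ 1) : h = u1 i :=
  not_imp_comm.1 (hu.chi_symp_right_eq_one i h hh) hne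

lemma pair_eq_of_mem (hu : IsHyperbolicPairs χ G u1 u2)
    {i j : Fin e} {x : 𝕍 N} (hi : x ∈ s(u1 i, u2 i))
    (hj : x ∈ s(u1 j, u2 j)) : s(u1 i, u2 i) = s(u1 j, u2 j) := by
  have hne := hu.chi_symp_ne_one i
  have hne' : χ (symp (u2 i) (u1 i)) ≠ 1 := fun h => hne (chi_symp_swap_eq_one χ h)
  rcases Sym2.mem_iff.1 hi with rfl | rfl <;> rcases Sym2.mem_iff.1 hj with hj | hj <;>
    rw [hj] at hne hne'
  · rw [hj, hu.eq_right_of_chi_symp_ne_one (hu.right_mem i) hne]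
  · rw [hj, hu.eq_left_of_chi_symp_ne_one (hu.right_mem i) hne, Sym2.eq_swap]
  · rw [hj, hu.eq_right_of_chi_symp_ne_one (hu.left_mem i) hne', Sym2.eq_swap]
  · rw [hj, hu.eq_left_of_chi_symp_ne_one (hu.left_mem i) hne']

lemma chi_symp_eq_one_of_pair_ne (hu : IsHyperbolicPairs χ G u1 u2)
    {i j : Fin e} (hij : s(u1 i, u2 i) ≠ s(u1 j, u2 j))
    {x y : 𝕍 N} (hx : x ∈ s(u1 i, u2 i)) (hy : y ∈ s(u1 j, u2 j)) : χ (symp x y) = 1 := by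
  have hyG : y ∈ G := by
    rcases Sym2.mem_iff.1 hy with rfl | rfl
    exacts [hu.left_mem j, hu.right_mem j]
  have hyi : y ∉ s(u1 i, u2 i) := fun hyi => hij (hu.pair_eq_of_mem hyi hy)
  rcases Sym2.mem_iff.1 hx with rfl | rfl
  · exact hu.chi_symp_left_eq_one i y hyG fun h => hyi (h ▸ Sym2.mem_mk_right _ _)
  · exact hu.chi_symp_right_eq_one i y hyG fun h => hyi (h ▸ Sym2.mem_mk_left _ _)

end IsHyperbolicPairs

end Hyperbolic

section Lift

variable [CommRing R] {n c e d : ℕ}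

lemma chi_symp_eq_one_of_ne (χ : AddChar R ℂ) {a1 a2 : Fin e → 𝕍 c}
    (hs11 : ∀ i j, i ≠ j → χ (symp (a1 i) (a1 j)) = 1)
    (hs22 : ∀ i j, i ≠ j → χ (symp (a2 i) (a2 j)) = 1)
    (hs12 : ∀ i k, i ≠ k → χ (symp (a1 i) (a2 k)) = 1) {i j : Fin e} (hij : i ≠ j)
    {w w' : 𝕍 c} (hw : w ∈ s(a1 i, -a2 i)) (hw' : w' ∈ s(a1 j, -a2 j)) :
    χ (symp w w') = 1 := by
  rcases Sym2.mem_iff.1 hw with rfl | rfl <;> rcases Sym2.mem_iff.1 hw' with rfl | rfl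
  · exact hs11 i j hij
  · rw [symp_neg_right]
    exact χ.map_neg_eq_one (hs12 i j hij)
  · rw [symp_neg_left]
    exact χ.map_neg_eq_one (chi_symp_swap_eq_one χ (hs12 j i hij.symm))
  · rw [symp_neg_left, symp_neg_right, neg_neg]
    exact hs22 i j hij

def liftedGenerators (u1 u2 : Fin e → 𝕍 n) (z : Fin d → 𝕍 n) (a1 a2 : Fin e → 𝕍 c) :
    Set (𝕍 (n + c)) :=
  (⋃ i ∈ Set.range (Set.rangeSplitting fun i => s(u1 i, u2 i)),
    {sympAppend (u1 i) (a1 i), sympAppend (u2 i) (-a2 i)}) ∪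
  Set.range fun k => sympAppend (z k) 0

lemma punct_image_liftedGenerators (u1 u2 : Fin e → 𝕍 n) (z : Fin d → 𝕍 n)
    (a1 a2 : Fin e → 𝕍 c) :
    punct n c '' liftedGenerators u1 u2 z a1 a2 = Set.range u1 ∪ Set.range u2 ∪ Set.range z := by
  have hpair : ∀ i j, s(u1 i, u2 i) = s(u1 j, u2 j) →
      ({u1 i, u2 i} : Set (𝕍 n)) = {u1 j, u2 j} := by
    intro i j hij
    rcases Sym2.eq_iff.1 hij with ⟨h1, h2⟩ | ⟨h1, h2⟩
    · rw [h1, h2]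
    · rw [h1, h2, Set.pair_comm]
  simp only [liftedGenerators, Set.image_union, Set.image_iUnion₂, Set.image_pair,
    ← Set.range_comp, Function.comp_def, punct_sympAppend]
  rw [iUnion_mem_range_rangeSplitting _ _ hpair, Set.iUnion_insert_eq_range_union_iUnion, Set.iUnion_singleton_eq_range]

lemma liftedGenerators_subset_chiDualSet {χ : AddChar R ℂ} {u1 u2 : Fin e → 𝕍 n}
    {z : Fin d → 𝕍 n} {a1 a2 : Fin e → 𝕍 c}
    (hu : IsHyperbolicPairs χ (Set.range u1 ∪ Set.range u2 ∪ Set.range z) u1 u2)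
    (hiso : ∀ k, ∀ h ∈ Set.range u1 ∪ Set.range u2 ∪ Set.range z, χ (symp (z k) h) = 1)
    (hs11 : ∀ i j, i ≠ j → χ (symp (a1 i) (a1 j)) = 1)
    (hs22 : ∀ i j, i ≠ j → χ (symp (a2 i) (a2 j)) = 1)
    (hs12 : ∀ i k, i ≠ k → χ (symp (a1 i) (a2 k)) = 1)
    (hmatch : ∀ i, χ (symp (u1 i) (u2 i)) = χ (symp (a1 i) (a2 i))) :
    liftedGenerators u1 u2 z a1 a2 ⊆ chiDualSet χ (liftedGenerators u1 u2 z a1 a2) := by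
  set T := liftedGenerators u1 u2 z a1 a2
  have hz : ∀ k, ∀ y ∈ T, χ (symp (sympAppend (z k) 0) y) = 1 := by
    rintro k y (hy | ⟨j, rfl⟩)
    · obtain ⟨i, -, hy⟩ := Set.mem_iUnion₂.1 hy
      rcases hy with rfl | rfl <;>
        rw [chi_symp_sympAppend, symp_zero_left, AddChar.map_zero_eq_one, mul_one] <;>
        exact hiso k _ (by simp)
    · rw [chi_symp_sympAppend, symp_zero_left, AddChar.map_zero_eq_one, mul_one]
      exact hiso k _ (by simp)
  intro y hy x hx
  rcases hx with hx | ⟨k, rfl⟩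
  swap
  · exact hz k y hy
  rcases hy with hy | ⟨k, rfl⟩
  swap
  · exact chi_symp_swap_eq_one χ (hz k x (Or.inl hx))
  obtain ⟨i, ⟨p, rfl⟩, hx⟩ := Set.mem_iUnion₂.1 hx
  obtain ⟨j, ⟨q, rfl⟩, hy⟩ := Set.mem_iUnion₂.1 hy
  by_cases hpq : p = q
  · subst hpq
    exact chi_symp_eq_one_of_mem_pair χ (chi_symp_sympAppend_neg_eq_one (hmatch _)) hx hy
  · have hne : s(u1 (Set.rangeSplitting _ p), u2 (Set.rangeSplitting _ p)) ≠
        s(u1 (Set.rangeSplitting _ q), u2 (Set.rangeSplitting _ q)) := fun h =>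
      hpq (Subtype.ext ((Set.apply_rangeSplitting _ p).symm.trans
        (h.trans (Set.apply_rangeSplitting _ q))))
    have hij := (Set.rangeSplitting_injective _).ne hpq
    rcases hx with rfl | rfl <;> rcases hy with rfl | rfl <;>
      rw [chi_symp_sympAppend, hu.chi_symp_eq_one_of_pair_ne hne (by simp) (by simp),
        chi_symp_eq_one_of_ne χ hs11 hs22 hs12 hij (by simp) (by simp), one_mul]

end Lift

end

theorem stmt_7_general
    (R : Type) [CommRing R]
    (χ : AddChar R ℂ)
    (n e c d : ℕ)
    (u1 u2 : Fin e → (Fin n → R) × (Fin n → R))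
    (z : Fin d → (Fin n → R) × (Fin n → R))
    (C : AddSubgroup ((Fin n → R) × (Fin n → R)))
    (hgen : AddSubgroup.closure (Set.range u1 ∪ Set.range u2 ∪ Set.range z) = C)
    (hiso : ∀ j, ∀ h ∈ Set.range u1 ∪ Set.range u2 ∪ Set.range z,
      χ (symp (z j) h) = 1)
    (hhyp1 : ∀ i, χ (symp (u1 i) (u2 i)) ≠ 1)
    (hhyp2 : ∀ i, ∀ h ∈ Set.range u1 ∪ Set.range u2 ∪ Set.range z,
      h ≠ u2 i → χ (symp (u1 i) h) = 1)
    (hhyp3 : ∀ i, ∀ h ∈ Set.range u1 ∪ Set.range u2 ∪ Set.range z,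
      h ≠ u1 i → χ (symp (u2 i) h) = 1)
    (a1 a2 : Fin e → (Fin c → R) × (Fin c → R))
    (hs11 : ∀ i j, i ≠ j → χ (symp (a1 i) (a1 j)) = 1)
    (hs22 : ∀ i j, i ≠ j → χ (symp (a2 i) (a2 j)) = 1)
    (hs12 : ∀ i k, i ≠ k → χ (symp (a1 i) (a2 k)) = 1)
    (hmatch : ∀ i, χ (symp (u1 i) (u2 i)) = χ (symp (a1 i) (a2 i))) :
    ∃ C' : AddSubgroup ((Fin (n + c) → R) × (Fin (n + c) → R)),
      (∀ x ∈ C', ∀ y ∈ C', χ (symp x y) = 1) ∧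
      punct n c '' (C' : Set ((Fin (n + c) → R) × (Fin (n + c) → R))) = (C : Set ((Fin n → R) × (Fin n → R))) := by
  have hu : IsHyperbolicPairs χ (Set.range u1 ∪ Set.range u2 ∪ Set.range z) u1 u2 :=
    ⟨fun i => by simp, fun i => by simp, hhyp1, hhyp2, hhyp3⟩
  have hT := liftedGenerators_subset_chiDualSet hu hiso hs11 hs22 hs12 hmatch
  refine ⟨AddSubgroup.closure (liftedGenerators u1 u2 z a1 a2), fun x hx y hy => ?_, ?_⟩
  · exact closure_subset_chiDualSet χ hT hy x hx
  · rw [punct_image_closure, punct_image_liftedGenerators, hgen]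

theorem stmt_7 (p b : ℕ) (hp : p.Prime) (hb : 0 < b)
    (R : Type) [CommRing R] [Fintype R] [IsLocalRing R] [CharP R (p ^ b)]
    (χ : AddChar R ℂ)
    (hχ : ∀ ψ : AddChar R ℂ, ∃ r : R, ∀ t : R, ψ t = χ (r * t))
    (n e c d : ℕ)
    (u1 u2 : Fin e → (Fin n → R) × (Fin n → R))
    (z : Fin d → (Fin n → R) × (Fin n → R))
    (C : AddSubgroup ((Fin n → R) × (Fin n → R)))
    (hgen : AddSubgroup.closure (Set.range u1 ∪ Set.range u2 ∪ Set.range z) = C)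
    (hiso : ∀ j, ∀ h ∈ Set.range u1 ∪ Set.range u2 ∪ Set.range z,
      χ (symp (z j) h) = 1)
    (hhyp1 : ∀ i, χ (symp (u1 i) (u2 i)) ≠ 1)
    (hhyp2 : ∀ i, ∀ h ∈ Set.range u1 ∪ Set.range u2 ∪ Set.range z,
      h ≠ u2 i → χ (symp (u1 i) h) = 1)
    (hhyp3 : ∀ i, ∀ h ∈ Set.range u1 ∪ Set.range u2 ∪ Set.range z,
      h ≠ u1 i → χ (symp (u2 i) h) = 1)
    (a1 a2 : Fin e → (Fin c → R) × (Fin c → R))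
    (hs11 : ∀ i j, i ≠ j → χ (symp (a1 i) (a1 j)) = 1)
    (hs22 : ∀ i j, i ≠ j → χ (symp (a2 i) (a2 j)) = 1)
    (hs12 : ∀ i k, i ≠ k → χ (symp (a1 i) (a2 k)) = 1)
    (hsne : ∀ i, χ (symp (a1 i) (a2 i)) ≠ 1)
    (hmatch : ∀ i, χ (symp (u1 i) (u2 i)) = χ (symp (a1 i) (a2 i))) :
    ∃ C' : AddSubgroup ((Fin (n + c) → R) × (Fin (n + c) → R)),
      (∀ x ∈ C', ∀ y ∈ C', χ (symp x y) = 1) ∧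
      punct n c '' (C' : Set ((Fin (n + c) → R) × (Fin (n + c) → R))) = (C : Set ((Fin n → R) × (Fin n → R))) :=
  stmt_7_general R χ n e c d u1 u2 z C hgen hiso hhyp1 hhyp2 hhyp3 a1 a2 hs11 hs22 hs12 hmatch
end

section
/- Let R be a finite commutative local Frobenius ring of characteristic p^b with generating character χ, C ⊆ R^{2n} an additive code, and G a generating set of C as a Z_{p^b}-module consisting only of isotropic generators and hyperbolic pairs, with G_hyp the set of generators forming the hyperbolic pairs. Then for each t = 0, 1, ..., b, |G_hyp ∩ C^{⊥_{χ,t}}| = rank(C / (C ∩ C^{⊥_χ})) − rank(C / (C ∩ C^{⊥_{χ,t}})). -/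
open scoped BigOperators

/-!
A hyperbolic generator `e s` lies in `C^{⊥_{χ,t}}` exactly when the character value `ζ_s` of its
pair satisfies `ζ_s ^ p^t = 1`, and an isotropic generator always does; so the hyperbolic
generators with `ζ_s ^ p^t ≠ 1` generate `C` modulo `C^{⊥_{χ,t}}`. Conversely, for those `s` the
characters `x ↦ χ ⟨e s | x⟩ ^ (ord ζ_s / p)` are trivial on `C^{⊥_{χ,t}}`, take `p`-th roots of
unity as values on `C`, and jointly separate `p ^ #{s}` elements of `C`, while `k` generators
modulo `C^{⊥_{χ,t}}` leave room for at most `p ^ k` values. Hence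
`rank (C / (C ∩ C^{⊥_{χ,t}})) = #{s | ζ_s ^ p^t ≠ 1}`; at `t = 0` this counts every hyperbolic
generator, and the difference counts those in `C^{⊥_{χ,t}}`.
-/
def GeneratesModulo {V ι : Type*} [AddCommGroup V] [Fintype ι] (C D : Set V) (f : ι → V) :
    Prop :=
  (∀ i, f i ∈ C) ∧ ∀ x ∈ C, ∃ g : ι → ℤ, x - ∑ i, g i • f i ∈ D

section GeneratesModulo

variable {V : Type*} [AddCommGroup V]

theorem GeneratesModulo.comp_equiv {ι κ : Type*} [Fintype ι] [Fintype κ] {C D : Set V}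
    {f : ι → V} (hf : GeneratesModulo C D f) (σ : κ ≃ ι) : GeneratesModulo C D (f ∘ σ) := by
  refine ⟨fun i => hf.1 (σ i), fun x hx => ?_⟩
  obtain ⟨g, hg⟩ := hf.2 x hx
  refine ⟨g ∘ σ, ?_⟩
  rwa [Function.comp_def, Function.comp_def, σ.sum_comp fun i => g i • f i]

theorem relRank_eq_card {ι : Type*} [Fintype ι] {C D : Set V} {f : ι → V}
    (hf : GeneratesModulo C D f)
    (hmin : ∀ k (f' : Fin k → V), GeneratesModulo C D f' → Fintype.card ι ≤ k) :
    relRank C D = Fintype.card ι :=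
  have hmem : Fintype.card ι ∈ {k | ∃ f' : Fin k → V, GeneratesModulo C D f'} :=
    ⟨_, hf.comp_equiv (Fintype.equivFin ι).symm⟩
  le_antisymm (Nat.sInf_le hmem) (le_csInf ⟨_, hmem⟩ fun k ⟨f', hf'⟩ => hmin k f' hf')

theorem generatesModulo_closure {ι : Type*} [Fintype ι] {S : Set V} {D : AddSubgroup V}
    {f : ι → V} (hf : ∀ i, f i ∈ AddSubgroup.closure S)
    (hS : ∀ x ∈ S, x ∈ D ∨ x ∈ Set.range f) :
    GeneratesModulo (AddSubgroup.closure S : Set V) D f := by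
  classical
  refine ⟨hf, fun x hx => ?_⟩
  simp only [SetLike.mem_coe] at hx ⊢
  induction hx using AddSubgroup.closure_induction with
  | mem x hx =>
    rcases hS x hx with hD | ⟨i, rfl⟩
    · exact ⟨0, by simpa using hD⟩
    · exact ⟨Pi.single i 1, by simp [Pi.single_apply, D.zero_mem]⟩
  | zero => exact ⟨0, by simp [D.zero_mem]⟩
  | add x y _ _ hx hy =>
    obtain ⟨g, hg⟩ := hx
    obtain ⟨g', hg'⟩ := hy
    refine ⟨g + g', ?_⟩
    convert D.add_mem hg hg' using 1
    simp only [Pi.add_apply, add_smul, Finset.sum_add_distrib]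
    abel
  | neg x _ hx =>
    obtain ⟨g, hg⟩ := hx
    refine ⟨-g, ?_⟩
    convert D.neg_mem hg using 1
    simp only [Pi.neg_apply, neg_smul, Finset.sum_neg_distrib]
    abel

end GeneratesModulo

namespace AddChar

variable {A M : Type*}

theorem map_sum_eq_prod [AddCommMonoid A] [CommMonoid M] (ψ : AddChar A M) {ι : Type*}
    (s : Finset ι) (f : ι → A) : ψ (∑ i ∈ s, f i) = ∏ i ∈ s, ψ (f i) := by
  induction s using Finset.cons_induction with
  | empty => simp
  | cons a s ha ih => rw [Finset.sum_cons, Finset.prod_cons, map_add_eq_mul, ih]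

theorem pow_eq_one_of_charP [CommRing A] [Monoid M] {q : ℕ} [CharP A q] (ψ : AddChar A M)
    (a : A) : ψ a ^ q = 1 := by
  rw [← map_nsmul_eq_pow, nsmul_eq_mul, CharP.cast_eq_zero, zero_mul, map_zero_eq_one]

def pi {ι : Type*} [AddMonoid A] [Monoid M] (ψ : ι → AddChar A M) : AddChar A (ι → M) where
  toFun a i := ψ i a
  map_zero_eq_one' := funext fun i => (ψ i).map_zero_eq_one
  map_add_eq_mul' a b := funext fun i => (ψ i).map_add_eq_mul a b

def kerPow [AddGroup A] [CommMonoid M] (ψ : AddChar A M) (N : ℕ) : AddSubgroup A where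
  carrier := {a | ψ a ^ N = 1}
  add_mem' {a b} ha hb := by
    simp only [Set.mem_ofPred_eq, map_add_eq_mul, mul_pow] at ha hb ⊢
    rw [ha, hb, one_mul]
  zero_mem' := by simp
  neg_mem' {a} ha := by
    have h : ψ (-a) ^ N * ψ a ^ N = 1 := by
      rw [← mul_pow, ← map_add_eq_mul, neg_add_cancel, map_zero_eq_one, one_pow]
    rwa [show ψ a ^ N = 1 from ha, mul_one] at h

variable [AddCommGroup A] [CommMonoid M]

theorem map_zsmul_eq_pow_toNat_emod (θ : AddChar A M) {C : AddSubgroup A} {p : ℕ} (hp : 0 < p)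
    (hC : ∀ x ∈ C, θ x ^ p = 1) {y : A} (hy : y ∈ C) (g : ℤ) :
    θ (g • y) = θ y ^ (g % p).toNat := by
  have hsplit : g • y = (g % p).toNat • y + p • ((g / p) • y) := by
    rw [← natCast_zsmul, ← natCast_zsmul, Int.toNat_of_nonneg (Int.emod_nonneg _ (by omega)),
      smul_smul, ← add_zsmul, Int.emod_add_mul_ediv]
  rw [hsplit, map_add_eq_mul, map_nsmul_eq_pow, map_nsmul_eq_pow, hC _ (C.zsmul_mem hy _),
    mul_one]

theorem image_subset_range_prod_pow (θ : AddChar A M) {C : AddSubgroup A} {D : Set A}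
    {p k : ℕ} (hp : 0 < p) (hD : ∀ x ∈ D, θ x = 1) (hC : ∀ x ∈ C, θ x ^ p = 1)
    {f : Fin k → A} (hf : GeneratesModulo (C : Set A) D f) :
    θ '' C ⊆ Set.range fun e : Fin k → Fin p => ∏ i, θ (f i) ^ (e i : ℕ) := by
  rintro _ ⟨x, hx, rfl⟩
  obtain ⟨g, hg⟩ := hf.2 x hx
  refine ⟨fun i => ⟨(g i % p).toNat, Int.natMod_lt hp.ne'⟩, ?_⟩
  calc ∏ i, θ (f i) ^ (g i % p).toNat
      = ∏ i, θ (g i • f i) :=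
        Finset.prod_congr rfl fun i _ =>
          (θ.map_zsmul_eq_pow_toNat_emod hp hC (hf.1 i) (g i)).symm
    _ = θ (x - ∑ i, g i • f i) * θ (∑ i, g i • f i) := by rw [hD _ hg, one_mul, map_sum_eq_prod]
    _ = θ x := by rw [← map_add_eq_mul, sub_add_cancel]

theorem injective_sum_nsmul {ι : Type*} [Fintype ι] (θ : AddChar A (ι → M)) {p : ℕ}
    {y : ι → A} (hoff : ∀ i j, j ≠ i → θ (y j) i = 1) (hord : ∀ i, orderOf (θ (y i) i) = p) :
    Function.Injective fun e : ι → Fin p => θ (∑ j, (e j : ℕ) • y j) := by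
  have heval (e : ι → Fin p) (i : ι) : θ (∑ j, (e j : ℕ) • y j) i = θ (y i) i ^ (e i : ℕ) := by
    rw [map_sum_eq_prod, Finset.prod_apply, Finset.prod_eq_single i
      (fun j _ hj => by rw [map_nsmul_eq_pow, Pi.pow_apply, hoff i j hj, one_pow])
      (by simp), map_nsmul_eq_pow, Pi.pow_apply]
  intro e e' h
  funext i
  have hi := congrFun h i
  simp only [heval] at hi
  exact Fin.ext (pow_injOn_Iio_orderOf (by simp [hord]) (by simp [hord]) hi)

theorem card_le_of_generatesModulo {ι : Type*} [Fintype ι] (θ : AddChar A (ι → M))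
    {C : AddSubgroup A} {D : Set A} {p k : ℕ} (hp : 1 < p) (hD : ∀ x ∈ D, θ x = 1)
    (hC : ∀ x ∈ C, θ x ^ p = 1) {y : ι → A} (hy : ∀ i, y i ∈ C)
    (hoff : ∀ i j, j ≠ i → θ (y j) i = 1) (hord : ∀ i, orderOf (θ (y i) i) = p)
    {f : Fin k → A} (hf : GeneratesModulo (C : Set A) D f) : Fintype.card ι ≤ k := by
  have hsub : (Set.range fun e : ι → Fin p => θ (∑ j, (e j : ℕ) • y j)) ⊆
      Set.range fun e : Fin k → Fin p => ∏ i, θ (f i) ^ (e i : ℕ) :=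
    (Set.range_subset_iff.2 fun e =>
        Set.mem_image_of_mem θ (C.sum_mem fun j _ => C.nsmul_mem (hy j) _)).trans
      (θ.image_subset_range_prod_pow (by omega) hD hC hf)
  have hcard := (Nat.card_mono (Set.finite_range _) hsub).trans (Finite.card_range_le _)
  rw [Nat.card_range_of_injective (θ.injective_sum_nsmul hoff hord)] at hcard
  simp only [Nat.card_fun, Nat.card_eq_fintype_card, Fintype.card_fun, Fintype.card_fin] at hcard
  exact (Nat.pow_le_pow_iff_right hp).1 hcard

end AddChar

theorem Nat.pow_succ_dvd_of_dvd_prime_pow {p b τ o : ℕ} (hp : p.Prime) (hb : o ∣ p ^ b)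
    (hτ : ¬o ∣ p ^ τ) : p ^ (τ + 1) ∣ o := by
  obtain ⟨a, -, rfl⟩ := (Nat.dvd_prime_pow hp).1 hb
  exact pow_dvd_pow p (by_contra fun h => hτ (pow_dvd_pow p (by omega)))

section Symplectic

variable {R : Type*} [CommRing R] {n : ℕ}

theorem symp_add_right_s10 (u v w : (Fin n → R) × (Fin n → R)) :
    symp u (v + w) = symp u v + symp u w := by
  simp only [symp, Prod.fst_add, Prod.snd_add, dotProduct_add, add_dotProduct]
  ring

theorem symp_swap_s10 (u v : (Fin n → R) × (Fin n → R)) : symp u v = -symp v u := by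
  simp only [symp]
  ring

def sympChar {M : Type*} [Monoid M] (χ : AddChar R M) (u : (Fin n → R) × (Fin n → R)) :
    AddChar ((Fin n → R) × (Fin n → R)) M where
  toFun x := χ (symp u x)
  map_zero_eq_one' := by simp [symp]
  map_add_eq_mul' x y := by rw [symp_add_right_s10, χ.map_add_eq_mul]

theorem chiDualSetT_one (χ : R → ℂ) (S : Set ((Fin n → R) × (Fin n → R))) :
    chiDualSetT χ S 1 = chiDualSet χ S := by
  simp [chiDualSetT, chiDualSet]

variable (χ : AddChar R ℂ)

theorem mem_chiDualSetT_iff {S : Set ((Fin n → R) × (Fin n → R))} {N : ℕ}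
    {v : (Fin n → R) × (Fin n → R)} :
    v ∈ chiDualSetT χ S N ↔ ∀ x ∈ S, χ (symp v x) ^ N = 1 := by
  refine forall₂_congr fun x _ => ?_
  rw [symp_swap_s10 x v]
  exact (χ.kerPow N).neg_mem_iff

theorem chiDualSetT_closure (S : Set ((Fin n → R) × (Fin n → R))) (N : ℕ) :
    chiDualSetT χ (AddSubgroup.closure S : Set ((Fin n → R) × (Fin n → R))) N =
      chiDualSetT χ S N := by
  ext v
  simp only [mem_chiDualSetT_iff]
  exact ⟨fun h x hx => h x (AddSubgroup.subset_closure hx),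
    fun h x hx => (AddSubgroup.closure_le ((sympChar χ v).kerPow N)).2 h hx⟩

def chiDualSubgroup (S : Set ((Fin n → R) × (Fin n → R))) (N : ℕ) :
    AddSubgroup ((Fin n → R) × (Fin n → R)) where
  carrier := chiDualSetT χ S N
  add_mem' hx hy c hc := ((sympChar χ c).kerPow N).add_mem (hx c hc) (hy c hc)
  zero_mem' c _ := ((sympChar χ c).kerPow N).zero_mem
  neg_mem' hx c hc := ((sympChar χ c).kerPow N).neg_mem (hx c hc)

end Symplectic

section HyperbolicPairs

variable {R : Type*} [CommRing R] {n : ℕ} (χ : AddChar R ℂ) {ι κ : Type*}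
  (e : ι ⊕ ι → (Fin n → R) × (Fin n → R)) (z : κ → (Fin n → R) × (Fin n → R))

/-- The hyperbolic pairs are `(e (.inl i), e (.inr i))`, so `e s.swap` is the partner of `e s`. -/
def hypVal (s : ι ⊕ ι) : ℂ :=
  χ (symp (e s) (e s.swap))

theorem hypVal_swap (s : ι ⊕ ι) : hypVal χ e s.swap = (hypVal χ e s)⁻¹ := by
  rw [hypVal, hypVal, Sum.swap_swap, symp_swap_s10, AddChar.map_neg_eq_inv]

theorem isotropic_mem_chiDualSetT
    (hz : ∀ j, ∀ h ∈ Set.range e ∪ Set.range z, χ (symp (z j) h) = 1) (j : κ) (N : ℕ) :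
    z j ∈ chiDualSetT χ
      (AddSubgroup.closure (Set.range e ∪ Set.range z) : Set ((Fin n → R) × (Fin n → R))) N := by
  rw [chiDualSetT_closure, mem_chiDualSetT_iff]
  exact fun h hh => by rw [hz j h hh, one_pow]

theorem hyperbolic_mem_chiDualSetT_iff
    (he : ∀ s, ∀ h ∈ Set.range e ∪ Set.range z, h ≠ e s.swap → χ (symp (e s) h) = 1)
    (s : ι ⊕ ι) (N : ℕ) :
    e s ∈ chiDualSetT χ
        (AddSubgroup.closure (Set.range e ∪ Set.range z) : Set ((Fin n → R) × (Fin n → R))) N ↔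
      hypVal χ e s ^ N = 1 := by
  rw [chiDualSetT_closure, mem_chiDualSetT_iff]
  refine ⟨fun h => h _ (Or.inl ⟨s.swap, rfl⟩), fun h x hx => ?_⟩
  by_cases hxs : x = e s.swap
  · rwa [hxs]
  · rw [he s x hx hxs, one_pow]

open Classical in
theorem generatesModulo_hyperbolic [Fintype ι]
    (hz : ∀ j, ∀ h ∈ Set.range e ∪ Set.range z, χ (symp (z j) h) = 1)
    (he : ∀ s, ∀ h ∈ Set.range e ∪ Set.range z, h ≠ e s.swap → χ (symp (e s) h) = 1) (N : ℕ) :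
    GeneratesModulo
      (AddSubgroup.closure (Set.range e ∪ Set.range z) : Set ((Fin n → R) × (Fin n → R)))
      (chiDualSetT χ (AddSubgroup.closure (Set.range e ∪ Set.range z)) N)
      (fun s : {s // hypVal χ e s ^ N ≠ 1} => e s) := by
  refine generatesModulo_closure (D := chiDualSubgroup χ _ N)
    (fun s => AddSubgroup.subset_closure (Or.inl ⟨s, rfl⟩)) ?_
  rintro _ (⟨s, rfl⟩ | ⟨j, rfl⟩)
  · by_cases hs : hypVal χ e s ^ N = 1
    · exact Or.inl ((hyperbolic_mem_chiDualSetT_iff χ e z he s N).2 hs)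
    · exact Or.inr ⟨⟨s, hs⟩, rfl⟩
  · exact Or.inl (isotropic_mem_chiDualSetT χ e z hz j N)

open Classical in
theorem card_le_of_generatesModulo_hyperbolic [Fintype ι] {p b τ : ℕ} (hp : p.Prime)
    [CharP R (p ^ b)] (hinj : Function.Injective e)
    (he : ∀ s, ∀ h ∈ Set.range e ∪ Set.range z, h ≠ e s.swap → χ (symp (e s) h) = 1)
    {k : ℕ} {f : Fin k → (Fin n → R) × (Fin n → R)}
    (hf : GeneratesModulo
      (AddSubgroup.closure (Set.range e ∪ Set.range z) : Set ((Fin n → R) × (Fin n → R)))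
      (chiDualSetT χ (AddSubgroup.closure (Set.range e ∪ Set.range z)) (p ^ τ)) f) :
    Fintype.card {s // hypVal χ e s ^ p ^ τ ≠ 1} ≤ k := by
  have hmem (s : ι ⊕ ι) : e s ∈ AddSubgroup.closure (Set.range e ∪ Set.range z) :=
    AddSubgroup.subset_closure (Or.inl ⟨s, rfl⟩)
  have hdvd_pow (s : ι ⊕ ι) : orderOf (hypVal χ e s) ∣ p ^ b :=
    orderOf_dvd_of_pow_eq_one (χ.pow_eq_one_of_charP _)
  have hdvd (s : {s // hypVal χ e s ^ p ^ τ ≠ 1}) : p ^ (τ + 1) ∣ orderOf (hypVal χ e s) :=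
    Nat.pow_succ_dvd_of_dvd_prime_pow hp (hdvd_pow s) (mt orderOf_dvd_iff_pow_eq_one.1 s.2)
  have hp_dvd (s : {s // hypVal χ e s ^ p ^ τ ≠ 1}) : p ∣ orderOf (hypVal χ e s) :=
    (dvd_pow_self p τ.succ_ne_zero).trans (hdvd s)
  -- the exponent `orderOf (hypVal χ e s) / p` makes `hypVal χ e s` a primitive `p`-th root of unity
  refine AddChar.card_le_of_generatesModulo
    (AddChar.pi fun s : {s // hypVal χ e s ^ p ^ τ ≠ 1} =>
      sympChar χ (e s) ^ (orderOf (hypVal χ e s) / p)) hp.one_lt ?_ ?_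
    (y := fun s => e s.1.swap) (fun s => hmem _) ?_ ?_ hf
  · intro x hx
    funext s
    obtain ⟨q, hq⟩ : p ^ τ ∣ orderOf (hypVal χ e s) / p :=
      Nat.dvd_div_of_mul_dvd (by rw [← pow_succ']; exact hdvd s)
    show χ (symp (e s) x) ^ (orderOf (hypVal χ e s) / p) = 1
    rw [hq, pow_mul, hx _ (hmem s), one_pow]
  · intro x hx
    funext s
    show (χ (symp (e s) x) ^ (orderOf (hypVal χ e s) / p)) ^ p = 1
    rw [← pow_mul, Nat.div_mul_cancel (hp_dvd s)]
    exact (mem_chiDualSetT_iff χ).1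
      ((hyperbolic_mem_chiDualSetT_iff χ e z he s _).2 (pow_orderOf_eq_one _)) x hx
  · intro s t hts
    show χ (symp (e s) (e t.1.swap)) ^ _ = 1
    have hne : e t.1.swap ≠ e s.1.swap := fun h =>
      hts (Subtype.ext (Sum.swap_leftInverse.injective (hinj h)))
    rw [he s _ (Or.inl ⟨_, rfl⟩) hne, one_pow]
  · intro s
    exact orderOf_pow_orderOf_div (ne_zero_of_dvd_ne_zero (pow_ne_zero _ hp.ne_zero)
      (hdvd_pow s)) (hp_dvd s)

open Classical in
theorem relRank_chiDualSetT_hyperbolic [Fintype ι] {p b : ℕ} (hp : p.Prime) [CharP R (p ^ b)]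
    (hinj : Function.Injective e)
    (hz : ∀ j, ∀ h ∈ Set.range e ∪ Set.range z, χ (symp (z j) h) = 1)
    (he : ∀ s, ∀ h ∈ Set.range e ∪ Set.range z, h ≠ e s.swap → χ (symp (e s) h) = 1)
    (τ : ℕ) :
    relRank (AddSubgroup.closure (Set.range e ∪ Set.range z) : Set ((Fin n → R) × (Fin n → R)))
        (chiDualSetT χ (AddSubgroup.closure (Set.range e ∪ Set.range z)) (p ^ τ)) =
      Fintype.card {s // hypVal χ e s ^ p ^ τ ≠ 1} :=
  relRank_eq_card (generatesModulo_hyperbolic χ e z hz he _) fun _ _ hf =>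
    card_le_of_generatesModulo_hyperbolic χ e z hp hinj he hf

theorem card_range_inter_chiDualSetT (hinj : Function.Injective e)
    (he : ∀ s, ∀ h ∈ Set.range e ∪ Set.range z, h ≠ e s.swap → χ (symp (e s) h) = 1) (N : ℕ) :
    Nat.card ↥(Set.range e ∩ chiDualSetT χ
        (AddSubgroup.closure (Set.range e ∪ Set.range z) : Set ((Fin n → R) × (Fin n → R))) N) =
      Nat.card {s // hypVal χ e s ^ N = 1} := by
  have hrange : Set.range e ∩ chiDualSetT χ (AddSubgroup.closure (Set.range e ∪ Set.range z)) N =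
      Set.range fun s : {s // hypVal χ e s ^ N = 1} => e s := by
    ext x
    constructor
    · rintro ⟨⟨s, rfl⟩, hs⟩
      exact ⟨⟨s, (hyperbolic_mem_chiDualSetT_iff χ e z he s N).1 hs⟩, rfl⟩
    · rintro ⟨s, rfl⟩
      exact ⟨⟨s, rfl⟩, (hyperbolic_mem_chiDualSetT_iff χ e z he s N).2 s.2⟩
  rw [hrange]
  exact Nat.card_range_of_injective (hinj.comp Subtype.val_injective)

end HyperbolicPairs

theorem stmt_10_general (p b : ℕ) (hp : p.Prime)
    (R : Type) [CommRing R] [CharP R (p ^ b)]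
    (χ : AddChar R ℂ)
    (n c d : ℕ)
    (u1 u2 : Fin c → (Fin n → R) × (Fin n → R))
    (z : Fin d → (Fin n → R) × (Fin n → R))
    (C : AddSubgroup ((Fin n → R) × (Fin n → R)))
    (hgen : AddSubgroup.closure (Set.range u1 ∪ Set.range u2 ∪ Set.range z) = C)
    (hinj : Function.Injective (Sum.elim u1 (Sum.elim u2 z)))
    (hiso : ∀ j, ∀ h ∈ Set.range u1 ∪ Set.range u2 ∪ Set.range z,
      χ (symp (z j) h) = 1)
    (hhyp1 : ∀ i, χ (symp (u1 i) (u2 i)) ≠ 1)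
    (hhyp2 : ∀ i, ∀ h ∈ Set.range u1 ∪ Set.range u2 ∪ Set.range z,
      h ≠ u2 i → χ (symp (u1 i) h) = 1)
    (hhyp3 : ∀ i, ∀ h ∈ Set.range u1 ∪ Set.range u2 ∪ Set.range z,
      h ≠ u1 i → χ (symp (u2 i) h) = 1) :
    ∀ t ≤ b,
      Nat.card ↥((Set.range u1 ∪ Set.range u2) ∩
          chiDualSetT (⇑χ) (C : Set ((Fin n → R) × (Fin n → R))) (p ^ t)) =
        relRank (C : Set ((Fin n → R) × (Fin n → R))) (chiDualSet (⇑χ) (C : Set ((Fin n → R) × (Fin n → R)))) -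
          relRank (C : Set ((Fin n → R) × (Fin n → R))) (chiDualSetT (⇑χ) (C : Set ((Fin n → R) × (Fin n → R))) (p ^ t)) := by
  classical
  intro t _
  set e := Sum.elim u1 u2
  have hrange : Set.range u1 ∪ Set.range u2 = Set.range e := (Set.Sum.elim_range u1 u2).symm
  rw [hrange] at hgen hiso hhyp2 hhyp3 ⊢
  subst hgen
  have he_inj : Function.Injective e := by
    convert hinj.comp (Sum.map_injective.2 ⟨Function.injective_id, Sum.inl_injective⟩) using 1
    ext (i | i) <;> rfl
  have he : ∀ s, ∀ h ∈ Set.range e ∪ Set.range z, h ≠ e s.swap → χ (symp (e s) h) = 1 := by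
    rintro (i | i)
    exacts [hhyp2 i, hhyp3 i]
  have hne : ∀ s, hypVal χ e s ≠ 1 := by
    rintro (i | i)
    · exact hhyp1 i
    · rw [show Sum.inr i = (Sum.inl i).swap from rfl, hypVal_swap, inv_ne_one]
      exact hhyp1 i
  have hrank₀ := relRank_chiDualSetT_hyperbolic χ e z hp he_inj hiso he 0
  simp only [pow_zero, pow_one, chiDualSetT_one] at hrank₀
  rw [card_range_inter_chiDualSetT χ e z he_inj he, hrank₀,
    Fintype.card_congr (Equiv.subtypeUnivEquiv hne),
    relRank_chiDualSetT_hyperbolic χ e z hp he_inj hiso he, Fintype.card_subtype_compl,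
    Nat.card_eq_fintype_card]
  have := Fintype.card_subtype_le fun s => hypVal χ e s ^ p ^ t = 1
  omega

theorem stmt_10 (p b : ℕ) (hp : p.Prime) (hb : 0 < b)
    (R : Type) [CommRing R] [Fintype R] [IsLocalRing R] [CharP R (p ^ b)]
    (χ : AddChar R ℂ)
    (hχ : ∀ ψ : AddChar R ℂ, ∃ r : R, ∀ t : R, ψ t = χ (r * t))
    (n c d : ℕ)
    (u1 u2 : Fin c → (Fin n → R) × (Fin n → R))
    (z : Fin d → (Fin n → R) × (Fin n → R))
    (C : AddSubgroup ((Fin n → R) × (Fin n → R)))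
    (hgen : AddSubgroup.closure (Set.range u1 ∪ Set.range u2 ∪ Set.range z) = C)
    (hinj : Function.Injective (Sum.elim u1 (Sum.elim u2 z)))
    (hiso : ∀ j, ∀ h ∈ Set.range u1 ∪ Set.range u2 ∪ Set.range z,
      χ (symp (z j) h) = 1)
    (hhyp1 : ∀ i, χ (symp (u1 i) (u2 i)) ≠ 1)
    (hhyp2 : ∀ i, ∀ h ∈ Set.range u1 ∪ Set.range u2 ∪ Set.range z,
      h ≠ u2 i → χ (symp (u1 i) h) = 1)
    (hhyp3 : ∀ i, ∀ h ∈ Set.range u1 ∪ Set.range u2 ∪ Set.range z,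
      h ≠ u1 i → χ (symp (u2 i) h) = 1) :
    ∀ t ≤ b,
      Nat.card ↥((Set.range u1 ∪ Set.range u2) ∩
          chiDualSetT (⇑χ) (C : Set ((Fin n → R) × (Fin n → R))) (p ^ t)) =
        relRank (C : Set ((Fin n → R) × (Fin n → R))) (chiDualSet (⇑χ) (C : Set ((Fin n → R) × (Fin n → R)))) -
          relRank (C : Set ((Fin n → R) × (Fin n → R))) (chiDualSetT (⇑χ) (C : Set ((Fin n → R) × (Fin n → R))) (p ^ t)) :=
  stmt_10_general p b hp R χ n c d u1 u2 z C hgen hinj hiso hhyp1 hhyp2 hhyp3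
end
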